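/- In the deductive system CL2, the formula ⊓x⊔y (p(x) ∨ ¬p(y)) is provable, while the formula ⊔y⊓x (p(x) ∨ ¬p(y)) is not provable (p a unary predicate letter). -/

import Mathlib

/-!
A choice quantifier at the root of a formula leaves CL2 no freedom: `⊓x G` is provable only by
Rule A, i.e. iff `G(y)` is provable for a fresh `y`, and `⊔x G` only by Rule B2, i.e. iff `G(t)` is
provable for some `t` free for `x`; and an elementary formula is provable iff it is classically
valid. So `⊓x⊔y (p(x) ∨ ¬p(y))` reduces to the tautology `p(z) ∨ ¬p(z)`, whereas proving
`⊔y⊓x (p(x) ∨ ¬p(y))` would require `p(z) ∨ ¬p(t)` with `t ≠ x` (else `⊓x` captures it) and `z`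
fresh, hence `t ≠ z`, and that formula is falsifiable.
-/

/-- Terms of the language: variables and constants (both indexed by naturals). -/
inductive Term where
  | var : ℕ → Term
  | const : ℕ → Term
deriving DecidableEq

/-- Formulas of the language of CL2: the logical atoms ⊤,⊥, non-logical atoms
p(t₁,…,tₙ), the classical connectives ¬,∧,∨,→, the blind quantifiers ∀x,∃x, the
choice connectives ⊓,⊔ and the choice quantifiers ⊓x,⊔x. -/
inductive Fml where
  | top : Fml
  | bot : Fml
  | atom : ℕ → List Term → Fml
  | neg : Fml → Fml
  | and : Fml → Fml → Fml
  | or : Fml → Fml → Fml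
  | imp : Fml → Fml → Fml
  | all : ℕ → Fml → Fml
  | ex : ℕ → Fml → Fml
  | chand : Fml → Fml → Fml
  | chor : Fml → Fml → Fml
  | chall : ℕ → Fml → Fml
  | chex : ℕ → Fml → Fml

/-- Substitution of the term u for the variable x in a term. -/
def Term.subst (t : Term) (x : ℕ) (u : Term) : Term :=
  match t with
  | .var y => if y = x then u else .var y
  | .const c => .const c

/-- Substitution of the term u for all free occurrences of the variable x. -/
def Fml.subst : Fml → ℕ → Term → Fml
  | .top, _, _ => .top
  | .bot, _, _ => .bot
  | .atom p args, x, u => .atom p (args.map fun t => t.subst x u)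
  | .neg F, x, u => .neg (F.subst x u)
  | .and F G, x, u => .and (F.subst x u) (G.subst x u)
  | .or F G, x, u => .or (F.subst x u) (G.subst x u)
  | .imp F G, x, u => .imp (F.subst x u) (G.subst x u)
  | .all y F, x, u => if y = x then .all y F else .all y (F.subst x u)
  | .ex y F, x, u => if y = x then .ex y F else .ex y (F.subst x u)
  | .chand F G, x, u => .chand (F.subst x u) (G.subst x u)
  | .chor F G, x, u => .chor (F.subst x u) (G.subst x u)
  | .chall y F, x, u => if y = x then .chall y F else .chall y (F.subst x u)
  | .chex y F, x, u => if y = x then .chex y F else .chex y (F.subst x u)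

/-- Elementarization, relative to a sign (true = positive occurrence): positive
surface occurrences of ⊔-type subformulas become ⊥ and of ⊓-type become ⊤, and
dually for negative occurrences; → is read as flipping the sign of its
antecedent. -/
def Fml.elzAux : Bool → Fml → Fml
  | _, .top => .top
  | _, .bot => .bot
  | _, .atom p args => .atom p args
  | s, .neg F => .neg (Fml.elzAux (!s) F)
  | s, .and F G => .and (Fml.elzAux s F) (Fml.elzAux s G)
  | s, .or F G => .or (Fml.elzAux s F) (Fml.elzAux s G)
  | s, .imp F G => .imp (Fml.elzAux (!s) F) (Fml.elzAux s G)
  | s, .all x F => .all x (Fml.elzAux s F)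
  | s, .ex x F => .ex x (Fml.elzAux s F)
  | s, .chand _ _ => if s then .top else .bot
  | s, .chor _ _ => if s then .bot else .top
  | s, .chall _ _ => if s then .top else .bot
  | s, .chex _ _ => if s then .bot else .top

/-- The elementarization ‖F‖ of a formula F. -/
def Fml.elz (F : Fml) : Fml := Fml.elzAux true F

/-- The value of a term under a valuation (constants denote themselves). -/
def Term.val (v : ℕ → ℕ) : Term → ℕ
  | .var x => v x
  | .const c => c

/-- Classical satisfaction of a formula, in the model with domain the constants
{0,1,2,…}, where I interprets the predicate letters and v the variables.
(Used only on elementary formulas; choice operators are read classically.) -/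
def Fml.sat (I : ℕ → List ℕ → Prop) : (ℕ → ℕ) → Fml → Prop
  | _, .top => True
  | _, .bot => False
  | v, .atom p args => I p (args.map (Term.val v))
  | v, .neg F => ¬ Fml.sat I v F
  | v, .and F G => Fml.sat I v F ∧ Fml.sat I v G
  | v, .or F G => Fml.sat I v F ∨ Fml.sat I v G
  | v, .imp F G => Fml.sat I v F → Fml.sat I v G
  | v, .all x F => ∀ c : ℕ, Fml.sat I (Function.update v x c) F
  | v, .ex x F => ∃ c : ℕ, Fml.sat I (Function.update v x c) F
  | v, .chand F G => Fml.sat I v F ∧ Fml.sat I v G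
  | v, .chor F G => Fml.sat I v F ∨ Fml.sat I v G
  | v, .chall x F => ∀ c : ℕ, Fml.sat I (Function.update v x c) F
  | v, .chex x F => ∃ c : ℕ, Fml.sat I (Function.update v x c) F

/-- Classical validity (constants read as free variables, i.e. true under every
interpretation of the predicate letters and every valuation). -/
def Fml.Valid (F : Fml) : Prop := ∀ (I : ℕ → List ℕ → Prop) (v : ℕ → ℕ), F.sat I v

/-- A formula is stable iff its elementarization is classically valid. -/
def Fml.Stable (F : Fml) : Prop := F.elz.Valid

/-- Variables occurring in a term. -/
def Term.vars : Term → Finset ℕ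
  | .var x => {x}
  | .const _ => ∅

/-- All variables occurring (free or bound) in a formula. -/
def Fml.vars : Fml → Finset ℕ
  | .top => ∅
  | .bot => ∅
  | .atom _ args => args.foldr (fun t s => t.vars ∪ s) ∅
  | .neg F => F.vars
  | .and F G | .or F G | .imp F G | .chand F G | .chor F G => F.vars ∪ G.vars
  | .all x F | .ex x F | .chall x F | .chex x F => insert x F.vars

/-- The free variables of a formula. -/
def Fml.freeVars : Fml → Finset ℕ
  | .top => ∅
  | .bot => ∅
  | .atom _ args => args.foldr (fun t s => t.vars ∪ s) ∅
  | .neg F => F.freeVars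
  | .and F G | .or F G | .imp F G | .chand F G | .chor F G => F.freeVars ∪ G.freeVars
  | .all x F | .ex x F | .chall x F | .chex x F => F.freeVars.erase x

/-- `F.capturesAt x v` : some free occurrence of the variable x in F lies in
the scope of a quantifier (∀, ∃, ⊓ or ⊔) binding the variable v. -/
def Fml.capturesAt : Fml → ℕ → ℕ → Prop
  | .top, _, _ => False
  | .bot, _, _ => False
  | .atom _ _, _, _ => False
  | .neg F, x, v => F.capturesAt x v
  | .and F G, x, v | .or F G, x, v | .imp F G, x, v
  | .chand F G, x, v | .chor F G, x, v => F.capturesAt x v ∨ G.capturesAt x v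
  | .all y F, x, v | .ex y F, x, v | .chall y F, x, v | .chex y F, x, v =>
      x ≠ y ∧ ((y = v ∧ x ∈ F.freeVars) ∨ F.capturesAt x v)

/-- A path addressing a surface occurrence in a formula (surface = not in the
scope of any choice operator, so paths do not descend through ⊓,⊔,⊓x,⊔x). -/
inductive FPath where
  | here : FPath
  | negP : FPath → FPath
  | andL : FPath → FPath
  | andR : FPath → FPath
  | orL : FPath → FPath
  | orR : FPath → FPath
  | impL : FPath → FPath
  | impR : FPath → FPath
  | allP : FPath → FPath
  | exP : FPath → FPath

/-- The subformula of F at a surface path, together with its sign (true =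
positive, i.e. in the scope of an even number of negations, reading G → H as
¬G ∨ H) and the set of variables bound by blind quantifiers on the path. -/
def Fml.subAt : Fml → FPath → Option (Bool × Finset ℕ × Fml)
  | F, .here => some (true, ∅, F)
  | .neg F, .negP π => (F.subAt π).map fun r => (!r.1, r.2.1, r.2.2)
  | .and F _, .andL π => F.subAt π
  | .and _ G, .andR π => G.subAt π
  | .or F _, .orL π => F.subAt π
  | .or _ G, .orR π => G.subAt π
  | .imp F _, .impL π => (F.subAt π).map fun r => (!r.1, r.2.1, r.2.2)
  | .imp _ G, .impR π => G.subAt π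
  | .all x F, .allP π => (F.subAt π).map fun r => (r.1, insert x r.2.1, r.2.2)
  | .ex x F, .exP π => (F.subAt π).map fun r => (r.1, insert x r.2.1, r.2.2)
  | _, _ => none

/-- The result of replacing the subformula at a surface path by H. -/
def Fml.replaceAt : Fml → FPath → Fml → Option Fml
  | _, .here, H => some H
  | .neg F, .negP π, H => (F.replaceAt π H).map Fml.neg
  | .and F G, .andL π, H => (F.replaceAt π H).map fun F' => .and F' G
  | .and F G, .andR π, H => (G.replaceAt π H).map fun G' => .and F G'
  | .or F G, .orL π, H => (F.replaceAt π H).map fun F' => .or F' G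
  | .or F G, .orR π, H => (G.replaceAt π H).map fun G' => .or F G'
  | .imp F G, .impL π, H => (F.replaceAt π H).map fun F' => .imp F' G
  | .imp F G, .impR π, H => (G.replaceAt π H).map fun G' => .imp F G'
  | .all x F, .allP π, H => (F.replaceAt π H).map (Fml.all x)
  | .ex x F, .exP π, H => (F.replaceAt π H).map (Fml.ex x)
  | _, _, _ => none

/-- Provability in CL2, given by Rules A, B1 and B2. In Rule A, `ych` chooses,
for each positive surface occurrence of a ⊓-quantified subformula (resp.
negative occurrence of a ⊔-quantified one), some variable not occurring in F. -/
inductive Prov : Fml → Prop where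
  | ruleA (F : Fml) (hst : F.Stable) (ych : FPath → ℕ)
      (hfresh : ∀ π : FPath, ych π ∉ F.vars)
      (hcon : ∀ (π : FPath) (b : Finset ℕ) (G₁ G₂ : Fml),
        (F.subAt π = some (true, b, .chand G₁ G₂) ∨
         F.subAt π = some (false, b, .chor G₁ G₂)) →
        ∀ G : Fml, (G = G₁ ∨ G = G₂) →
        ∀ H : Fml, F.replaceAt π G = some H → Prov H)
      (hqu : ∀ (π : FPath) (b : Finset ℕ) (x : ℕ) (G : Fml),
        (F.subAt π = some (true, b, .chall x G) ∨
         F.subAt π = some (false, b, .chex x G)) →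
        ∀ H : Fml, F.replaceAt π (G.subst x (.var (ych π))) = some H → Prov H) :
      Prov F
  | ruleB1 (F F' : Fml) (π : FPath) (b : Finset ℕ) (G₁ G₂ G : Fml)
      (hocc : F.subAt π = some (false, b, .chand G₁ G₂) ∨
              F.subAt π = some (true, b, .chor G₁ G₂))
      (hG : G = G₁ ∨ G = G₂)
      (hrep : F.replaceAt π G = some F')
      (hprem : Prov F') : Prov F
  | ruleB2 (F F' : Fml) (π : FPath) (b : Finset ℕ) (x : ℕ) (G : Fml) (t : Term)
      (hocc : F.subAt π = some (false, b, .chall x G) ∨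
              F.subAt π = some (true, b, .chex x G))
      (hside : ∀ v : ℕ, t = .var v → v ∉ b ∧ ¬ G.capturesAt x v)
      (hrep : F.replaceAt π (G.subst x t) = some F')
      (hprem : Prov F') : Prov F

def Fml.Elem : Fml → Prop
  | .top | .bot | .atom _ _ => True
  | .neg F | .all _ F | .ex _ F => F.Elem
  | .and F G | .or F G | .imp F G => F.Elem ∧ G.Elem
  | .chand _ _ | .chor _ _ | .chall _ _ | .chex _ _ => False

namespace Fml

theorem Elem.of_subAt {F : Fml} (hF : F.Elem) {π : FPath} {r : Bool × Finset ℕ × Fml}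
    (h : F.subAt π = some r) : r.2.2.Elem := by
  induction π generalizing F r with
  | here =>
    simp only [subAt, Option.some.injEq] at h
    exact h ▸ hF
  | _ π ih =>
    cases F <;> simp only [subAt, reduceCtorEq, Option.map_eq_some_iff] at h
    all_goals
      try obtain ⟨r, h, rfl⟩ := h
      refine (ih ?_ h :)
      first | exact hF | exact hF.1 | exact hF.2

theorem subAt_chall {x : ℕ} {G : Fml} {π : FPath} {r : Bool × Finset ℕ × Fml}
    (h : (chall x G).subAt π = some r) : π = .here ∧ r = (true, ∅, chall x G) := by
  cases π <;> simp only [subAt, reduceCtorEq, Option.some.injEq] at h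
  exact ⟨rfl, h.symm⟩

theorem subAt_chex {x : ℕ} {G : Fml} {π : FPath} {r : Bool × Finset ℕ × Fml}
    (h : (chex x G).subAt π = some r) : π = .here ∧ r = (true, ∅, chex x G) := by
  cases π <;> simp only [subAt, reduceCtorEq, Option.some.injEq] at h
  exact ⟨rfl, h.symm⟩

theorem Elem.elzAux_eq {F : Fml} (hF : F.Elem) (s : Bool) : F.elzAux s = F := by
  induction F generalizing s with
  | neg F ih | all _ F ih | ex _ F ih => simp [elzAux, ih hF]
  | and F G ihF ihG | or F G ihF ihG | imp F G ihF ihG => simp [elzAux, ihF hF.1, ihG hF.2]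
  | chand | chor | chall | chex => exact hF.elim
  | top | bot | atom => rfl

theorem Elem.prov_iff_valid {F : Fml} (hF : F.Elem) : Prov F ↔ F.Valid := by
  constructor
  · rintro (⟨_, hst⟩ | ⟨_, _, _, _, _, _, _, hocc⟩ | ⟨_, _, _, _, _, _, _, hocc⟩)
    · rwa [Stable, elz, hF.elzAux_eq] at hst
    all_goals rcases hocc with h | h <;> exact (hF.of_subAt h).elim
  · intro hvalid
    obtain ⟨y, hy⟩ := Infinite.exists_notMem_finset F.vars
    refine Prov.ruleA F (by rwa [Stable, elz, hF.elzAux_eq]) (fun _ => y) (fun _ => hy) ?_ ?_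
    · rintro _ _ _ _ (h | h) <;> exact (hF.of_subAt h).elim
    · rintro _ _ _ _ (h | h) <;> exact (hF.of_subAt h).elim

end Fml

theorem prov_chall_iff {x : ℕ} {G : Fml} :
    Prov (.chall x G) ↔ ∃ y ∉ (Fml.chall x G).vars, Prov (G.subst x (.var y)) := by
  constructor
  · rintro (⟨_, -, ych, hfresh, -, hqu⟩ | ⟨_, _, _, _, _, _, _, hocc⟩ |
      ⟨_, _, _, _, _, _, _, hocc⟩)
    · exact ⟨ych .here, hfresh .here, hqu .here ∅ x G (.inl rfl) _ rfl⟩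
    all_goals rcases hocc with h | h <;> cases (Fml.subAt_chall h).2
  · rintro ⟨y, hy, hprov⟩
    refine Prov.ruleA _ (fun _ _ => trivial) (fun _ => y) (fun _ => hy) ?_ ?_
    · rintro _ _ _ _ (h | h) <;> cases (Fml.subAt_chall h).2
    · rintro _ _ _ _ (h | h) H hrep <;> obtain ⟨rfl, h⟩ := Fml.subAt_chall h <;> cases h
      exact Option.some.inj hrep ▸ hprov

theorem prov_chex_iff {x : ℕ} {G : Fml} :
    Prov (.chex x G) ↔
      ∃ t : Term, (∀ v, t = .var v → ¬ G.capturesAt x v) ∧ Prov (G.subst x t) := by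
  constructor
  · rintro (⟨_, hst⟩ | ⟨_, _, _, _, _, _, _, hocc⟩ |
      ⟨_, _, _, _, _, _, t, hocc, hside, hrep, hprem⟩)
    · exact (hst (fun _ _ => True) id).elim
    · rcases hocc with h | h <;> cases (Fml.subAt_chex h).2
    · rcases hocc with h | h <;> obtain ⟨rfl, h⟩ := Fml.subAt_chex h <;> cases h
      exact ⟨t, fun v hv => (hside v hv).2, Option.some.inj hrep ▸ hprem⟩
  · rintro ⟨t, hside, hprov⟩
    exact Prov.ruleB2 _ _ .here ∅ x G t (.inr rfl)
      (fun v hv => ⟨Finset.notMem_empty v, hside v hv⟩) rfl hprov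

theorem Term.subst_eq_self {t : Term} {x : ℕ} (h : ∀ v, t = .var v → v ≠ x) (u : Term) :
    t.subst x u = t := by
  cases t with
  | var w => simp [Term.subst, h w rfl]
  | const c => rfl

theorem Term.exists_val_ne {t : Term} {y : ℕ} (h : t ≠ .var y) : ∃ v : ℕ → ℕ, t.val v ≠ v y := by
  cases t with
  | var w =>
    refine ⟨fun n => if n = y then 1 else 0, ?_⟩
    have hwy : w ≠ y := fun hwy => h (hwy ▸ rfl)
    simp [Term.val, hwy]
  | const c => exact ⟨fun _ => c + 1, by simp [Term.val]⟩

theorem not_valid_atom_or_neg_atom {p y : ℕ} {t : Term} (h : t ≠ .var y) :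
    ¬ (Fml.or (.atom p [.var y]) (.neg (.atom p [t]))).Valid := by
  intro hvalid
  obtain ⟨v, hv⟩ := Term.exists_val_ne h
  rcases hvalid (fun _ l => l = [t.val v]) v with hy | ht
  · exact hv (List.cons.inj hy).1.symm
  · exact ht rfl

theorem not_prov_chall_atom_or_neg_atom {p x : ℕ} {t : Term} (ht : ∀ v, t = .var v → v ≠ x) :
    ¬ Prov (.chall x (.or (.atom p [.var x]) (.neg (.atom p [t])))) := by
  rw [prov_chall_iff]
  rintro ⟨y, hy, hprov⟩
  have hty : t ≠ .var y := by
    rintro rfl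
    simp [Fml.vars, Term.vars] at hy
  simp only [Fml.subst, List.map_cons, List.map_nil, Term.subst_eq_self ht] at hprov
  simp only [Term.subst, if_pos] at hprov
  exact not_valid_atom_or_neg_atom hty
    ((Fml.Elem.prov_iff_valid (by exact ⟨trivial, trivial⟩)).1 hprov)

/-- CL2 proves ⊓x⊔y (p(x) ∨ ¬p(y)) but does not prove
⊔y⊓x (p(x) ∨ ¬p(y)) (p a unary predicate letter; x = var 0, y = var 1). -/
theorem prov_chall_chex_not_chex_chall :
    Prov (.chall 0 (.chex 1 (.or (.atom 0 [.var 0]) (.neg (.atom 0 [.var 1]))))) ∧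
    ¬ Prov (.chex 1 (.chall 0 (.or (.atom 0 [.var 0]) (.neg (.atom 0 [.var 1]))))) := by
  constructor
  · refine prov_chall_iff.2 ⟨2, by decide, prov_chex_iff.2 ⟨.var 2, ?_, ?_⟩⟩
    · simp [Fml.subst, Term.subst, Fml.capturesAt]
    · exact (Fml.Elem.prov_iff_valid (by exact ⟨trivial, trivial⟩)).2 fun _ _ => em _
  · rw [prov_chex_iff]
    rintro ⟨t, hside, hprov⟩
    have ht : ∀ v, t = .var v → v ≠ 0 := by
      rintro v rfl rfl
      exact hside 0 rfl (by simp [Fml.capturesAt, Fml.freeVars, Term.vars])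
    exact not_prov_chall_atom_or_neg_atom ht hprov
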